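/- Let $(X_k)_{k\ge 1}$ be a sequence of centered real random variables such that there is a constant $C<\infty$ with: (i) $\mathbb{E} S_n^2 \le C n$ for all $n$, where $S_n=\sum_{k=1}^n X_k$; (ii) for every $n$ and every event $A\in\sigma(X_1,\dots,X_i)$, $|\sum_{k=i+1}^n \mathbb{E}[I_A X_i X_k]| \le C$; and (iii) for every $i<j$, the covariance bound $|\mathbb{E}[I_A S_{i-1} X_j]| \le C\,(\mathbb{E}[S_{i-1}^2 I_A])^{1/2}\rho(j-i)$ holds with $\sum_{j\ge 1}\rho(j)<\infty$. Then there exists $C'<\infty$ such that for all $\lambda>0$ and $n\ge 1$, $\mathbb{P}\left(\max_{1\le i\le n}|S_i|\ge\lambda\right) \le \frac{C' n}{\lambda^2} + \frac{C'\sqrt{n}}{\lambda}$. -/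

import Mathlib

/-!
Kolmogorov's first-passage argument. Let `A i` be the event that `|S i| ≥ λ` for the first time at
time `i`. On `A i`, `S n ^ 2 ≥ S i ^ 2 + 2 S i (S n - S i)`, so
`λ² P(A i) ≤ E[S n ^ 2; A i] + 2 |E[S i (S n - S i); A i]|`. Without independence the cross term
does not vanish: writing `S i = X i + S (i - 1)`, hypothesis (ii) bounds its `X i` part by `C`,
and hypothesis (iii), with `|S (i - 1)| < λ` on `A i`, bounds its `S (i - 1)` part by
`C λ √P(A i) ∑ ρ`. Summing over `i ≤ n`, the `E[S n ^ 2; A i]` add up to at most `C n`, and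
Cauchy–Schwarz gives `∑ √P(A i) ≤ √n`.
-/

open MeasureTheory Finset Function

section FirstPassage

variable {Ω : Type*}

def firstPassage (S : ℕ → Ω → ℝ) (lam : ℝ) (i : ℕ) : Set Ω :=
  {ω | (∀ k < i, |S k ω| < lam) ∧ lam ≤ |S i ω|}

variable {S : ℕ → Ω → ℝ} {lam : ℝ}

lemma pairwise_disjoint_firstPassage : Pairwise (Disjoint on firstPassage S lam) := by
  have hlt : ∀ i j, i < j → Disjoint (firstPassage S lam i) (firstPassage S lam j) :=
    fun i j hij => Set.disjoint_left.2 fun _ hi hj => (hj.1 i hij).not_ge hi.2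
  intro i j hij
  rcases hij.lt_or_gt with h | h
  exacts [hlt i j h, (hlt j i h).symm]

lemma measurableSet_firstPassage {m : MeasurableSpace Ω} {i : ℕ}
    (hS : ∀ k ≤ i, Measurable[m] (S k)) : MeasurableSet[m] (firstPassage S lam i) := by
  have : firstPassage S lam i =
      (⋂ k ∈ range i, {ω | |S k ω| < lam}) ∩ {ω | lam ≤ |S i ω|} := by
    ext ω; simp [firstPassage]
  rw [this]
  exact (measurableSet_biInter _ fun k hk =>
      measurableSet_lt (hS k (mem_range.1 hk).le).abs measurable_const).inter
    (measurableSet_le measurable_const (hS i le_rfl).abs)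

lemma sq_le_of_mem_firstPassage {i k : ℕ} {ω : Ω} (hω : ω ∈ firstPassage S lam i) (hk : k < i) :
    S k ω ^ 2 ≤ lam ^ 2 :=
  sq_le_sq' (abs_lt.1 (hω.1 k hk)).1.le (abs_lt.1 (hω.1 k hk)).2.le

lemma setOf_exists_le_abs_eq_biUnion_firstPassage (hS0 : ∀ ω, S 0 ω = 0) (hlam : 0 < lam)
    (n : ℕ) :
    {ω | ∃ i ∈ Icc 1 n, lam ≤ |S i ω|} = ⋃ i ∈ Icc 1 n, firstPassage S lam i := by
  classical
  ext ω
  simp only [Set.mem_iUnion, exists_prop]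
  constructor
  · rintro ⟨i, hi, hlami⟩
    have hex : ∃ j, lam ≤ |S j ω| := ⟨i, hlami⟩
    have hfirst_pos : Nat.find hex ≠ 0 := fun h0 => by
      have := Nat.find_spec hex
      rw [h0, hS0, abs_zero] at this
      exact this.not_gt hlam
    refine ⟨Nat.find hex, mem_Icc.2 ⟨Nat.one_le_iff_ne_zero.2 hfirst_pos,
      (Nat.find_min' hex hlami).trans (mem_Icc.1 hi).2⟩,
      fun k hk => not_le.1 (Nat.find_min hex hk), Nat.find_spec hex⟩
  · rintro ⟨i, hi, hω⟩
    exact ⟨i, hi, hω.2⟩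

end FirstPassage

section Kolmogorov

variable {Ω : Type*} [MeasurableSpace Ω] {μ : Measure Ω}

lemma sq_mul_measureReal_le_setIntegral_sq_add [IsFiniteMeasure μ] {f g : Ω → ℝ} {A : Set Ω}
    {lam : ℝ} (hf : MemLp f 2 μ) (hg : MemLp g 2 μ) (hA : MeasurableSet A)
    (hfA : ∀ ω ∈ A, lam ≤ |f ω|) (hlam : 0 ≤ lam) :
    lam ^ 2 * μ.real A ≤ ∫ ω in A, g ω ^ 2 ∂μ + 2 * |∫ ω in A, f ω * (g ω - f ω) ∂μ| := by
  have hf2 := (memLp_two_iff_integrable_sq hf.1).1 hf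
  have hg2 := (memLp_two_iff_integrable_sq hg.1).1 hg
  have hcross : Integrable (fun ω => f ω * (g ω - f ω)) μ := hf.integrable_mul (hg.sub hf)
  calc lam ^ 2 * μ.real A ≤ ∫ ω in A, f ω ^ 2 ∂μ :=
        setIntegral_ge_of_const_le_real hA (measure_ne_top μ A)
          (fun ω hω => by nlinarith [sq_abs (f ω), hfA ω hω]) hf2.integrableOn
    _ ≤ ∫ ω in A, (g ω ^ 2 - 2 * (f ω * (g ω - f ω))) ∂μ :=
        setIntegral_mono_on hf2.integrableOn (hg2.sub (hcross.const_mul 2)).integrableOn hA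
          fun ω _ => by nlinarith [sq_nonneg (g ω - f ω)]
    _ = ∫ ω in A, g ω ^ 2 ∂μ - 2 * ∫ ω in A, f ω * (g ω - f ω) ∂μ := by
        rw [integral_sub hg2.integrableOn (hcross.const_mul 2).integrableOn, integral_const_mul]
    _ ≤ _ := by linarith [neg_abs_le (∫ ω in A, f ω * (g ω - f ω) ∂μ)]

lemma sum_sqrt_measureReal_le_sqrt_card [IsProbabilityMeasure μ] {ι : Type*} (s : Finset ι)
    {A : ι → Set Ω} (hA : ∀ i, MeasurableSet (A i)) (hdisj : Pairwise (Disjoint on A)) :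
    ∑ i ∈ s, √(μ.real (A i)) ≤ √(#s) := by
  have hsum : ∑ i ∈ s, μ.real (A i) ≤ 1 := by
    rw [← measureReal_biUnion_finset (fun i _ j _ hij => hdisj hij) fun i _ => hA i]
    exact measureReal_le_one
  calc ∑ i ∈ s, √(μ.real (A i)) = ∑ i ∈ s, √(μ.real (A i)) * √1 := by simp
    _ ≤ √(∑ i ∈ s, μ.real (A i)) * √(∑ _i ∈ s, (1 : ℝ)) :=
        Real.sum_sqrt_mul_sqrt_le s (fun _ => measureReal_nonneg) fun _ => zero_le_one
    _ ≤ √1 * √(#s) := by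
        gcongr
        simp
    _ = √(#s) := by simp

lemma setIntegral_sq_rpow_half_le [IsFiniteMeasure μ] {f : Ω → ℝ} {A : Set Ω} {lam : ℝ}
    (hlam : 0 ≤ lam) (hfA : ∀ ω ∈ A, f ω ^ 2 ≤ lam ^ 2) :
    (∫ ω in A, f ω ^ 2 ∂μ) ^ ((1 : ℝ) / 2) ≤ lam * √(μ.real A) := by
  have h : ∫ ω in A, f ω ^ 2 ∂μ ≤ lam ^ 2 * μ.real A :=
    (le_abs_self _).trans <| norm_setIntegral_le_of_norm_le_const (f := fun ω => f ω ^ 2)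
      (measure_lt_top μ A) fun ω hω => by simpa using hfA ω hω
  calc (∫ ω in A, f ω ^ 2 ∂μ) ^ ((1 : ℝ) / 2) ≤ √(lam ^ 2 * μ.real A) := by
        rw [← Real.sqrt_eq_rpow]; exact Real.sqrt_le_sqrt h
    _ = lam * √(μ.real A) := by rw [Real.sqrt_mul (sq_nonneg lam), Real.sqrt_sq hlam]

variable {S : ℕ → Ω → ℝ} {lam : ℝ}

theorem sq_mul_measureReal_le_of_abs_setIntegral_cross_le [IsProbabilityMeasure μ]
    (hS0 : ∀ ω, S 0 ω = 0) (hSmeas : ∀ k, Measurable (S k)) (hS2 : ∀ k, MemLp (S k) 2 μ)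
    (hlam : 0 < lam) {a b : ℝ} (hb : 0 ≤ b) (n : ℕ)
    (hcross : ∀ i ∈ Icc 1 n, |∫ ω in firstPassage S lam i, S i ω * (S n ω - S i ω) ∂μ| ≤
      a + b * √(μ.real (firstPassage S lam i))) :
    lam ^ 2 * μ.real {ω | ∃ i ∈ Icc 1 n, lam ≤ |S i ω|} ≤
      ∫ ω, S n ω ^ 2 ∂μ + 2 * n * a + 2 * b * √n := by
  set A := firstPassage S lam
  have hA : ∀ i, MeasurableSet (A i) := fun i => measurableSet_firstPassage fun k _ => hSmeas k
  have hdisj : Set.PairwiseDisjoint (↑(Icc 1 n)) A :=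
    fun i _ j _ hij => pairwise_disjoint_firstPassage hij
  have hSn2 := (memLp_two_iff_integrable_sq (hS2 n).1).1 (hS2 n)
  have hsq : ∑ i ∈ Icc 1 n, ∫ ω in A i, S n ω ^ 2 ∂μ ≤ ∫ ω, S n ω ^ 2 ∂μ := by
    rw [← integral_biUnion_finset _ (fun i _ => hA i) hdisj fun i _ => hSn2.integrableOn]
    exact setIntegral_le_integral hSn2 (ae_of_all _ fun ω => sq_nonneg _)
  have hsqrt : ∑ i ∈ Icc 1 n, √(μ.real (A i)) ≤ √n := by
    simpa using sum_sqrt_measureReal_le_sqrt_card (Icc 1 n) hA pairwise_disjoint_firstPassage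
  rw [setOf_exists_le_abs_eq_biUnion_firstPassage hS0 hlam, measureReal_biUnion_finset hdisj
    fun i _ => hA i, mul_sum]
  calc ∑ i ∈ Icc 1 n, lam ^ 2 * μ.real (A i)
      ≤ ∑ i ∈ Icc 1 n, (∫ ω in A i, S n ω ^ 2 ∂μ + 2 * (a + b * √(μ.real (A i)))) :=
        sum_le_sum fun i hi => (sq_mul_measureReal_le_setIntegral_sq_add (hS2 i) (hS2 n) (hA i)
          (fun ω hω => hω.2) hlam.le).trans (by gcongr; exact hcross i hi)
    _ = ∑ i ∈ Icc 1 n, ∫ ω in A i, S n ω ^ 2 ∂μ + 2 * n * a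
          + 2 * b * ∑ i ∈ Icc 1 n, √(μ.real (A i)) := by
        simp only [sum_add_distrib, mul_add, ← mul_sum, sum_const, Nat.card_Icc, nsmul_eq_mul]
        push_cast; ring
    _ ≤ _ := by gcongr

end Kolmogorov

section PartialSums

variable {Ω : Type*} {X S : ℕ → Ω → ℝ}

abbrev pastSigma (X : ℕ → Ω → ℝ) (i : ℕ) : MeasurableSpace Ω :=
  ⨆ k ∈ Set.Icc 1 i, MeasurableSpace.comap (X k) inferInstance

lemma measurable_pastSigma {i k : ℕ} (hS : ∀ n ω, S n ω = ∑ k ∈ Icc 1 n, X k ω) (hki : k ≤ i) :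
    Measurable[pastSigma X i] (S k) := by
  rw [show S k = fun ω => ∑ j ∈ Icc 1 k, X j ω from funext (hS k)]
  refine measurable_sum _ fun j hj => Measurable.of_comap_le ?_
  have hj := mem_Icc.1 hj
  exact le_iSup₂ (f := fun k (_ : k ∈ Set.Icc 1 i) => MeasurableSpace.comap (X k) inferInstance)
    j ⟨hj.1, hj.2.trans hki⟩

lemma partialSum_eq_add {i : ℕ} (hS : ∀ n ω, S n ω = ∑ k ∈ Icc 1 n, X k ω) (hi : 1 ≤ i)
    (ω : Ω) : S i ω = X i ω + S (i - 1) ω := by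
  obtain ⟨j, rfl⟩ := Nat.exists_eq_add_of_le' hi
  rw [hS, hS, Nat.add_sub_cancel, sum_Icc_succ_top (Nat.le_add_left 1 j), add_comm]

lemma partialSum_sub_eq {i n : ℕ} (hS : ∀ n ω, S n ω = ∑ k ∈ Icc 1 n, X k ω) (hin : i ≤ n)
    (ω : Ω) : S n ω - S i ω = ∑ k ∈ Ioc i n, X k ω := by
  have hIcc : ∀ m, Icc 1 m = Ioc 0 m := fun m => Icc_add_one_left_eq_Ioc 0 m
  rw [hS, hS, hIcc, hIcc, sub_eq_iff_eq_add', sum_Ioc_consecutive _ (Nat.zero_le i) hin]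

end PartialSums

lemma sum_Ioc_sub_le_tsum {ρ : ℕ → ℝ} (hρ0 : ∀ j, 0 ≤ ρ j) (hρsum : Summable ρ) (i n : ℕ) :
    ∑ k ∈ Ioc i n, ρ (k - i) ≤ ∑' j, ρ j := by
  rw [← sum_image (g := fun k => k - i) fun a ha b hb h => by
    simp only [coe_Ioc, Set.mem_Ioc] at ha hb h; omega]
  exact hρsum.sum_le_tsum _ fun j _ => hρ0 j

section WeakDependence

variable {Ω : Type*} [MeasurableSpace Ω] {μ : Measure Ω} {X S : ℕ → Ω → ℝ}

lemma memLp_two_increment (hS : ∀ n ω, S n ω = ∑ k ∈ Icc 1 n, X k ω)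
    (hS2 : ∀ k, MemLp (S k) 2 μ) {k : ℕ} (hk : 1 ≤ k) : MemLp (X k) 2 μ := by
  have : X k = S k - S (k - 1) :=
    funext fun ω => by rw [Pi.sub_apply, partialSum_eq_add hS hk]; ring
  exact this ▸ (hS2 k).sub (hS2 (k - 1))

lemma setIntegral_partialSum_mul_sub_eq (hS : ∀ n ω, S n ω = ∑ k ∈ Icc 1 n, X k ω)
    (hS2 : ∀ k, MemLp (S k) 2 μ) {i n : ℕ} (hi : 1 ≤ i) (hin : i ≤ n) (A : Set Ω) :
    ∫ ω in A, S i ω * (S n ω - S i ω) ∂μ =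
      ∑ k ∈ Ioc i n, ∫ ω in A, X i ω * X k ω ∂μ +
        ∑ k ∈ Ioc i n, ∫ ω in A, S (i - 1) ω * X k ω ∂μ := by
  have hXi := memLp_two_increment hS hS2 hi
  have hXk : ∀ k ∈ Ioc i n, MemLp (X k) 2 μ :=
    fun k hk => memLp_two_increment hS hS2 (hi.trans (mem_Ioc.1 hk).1.le)
  have hXiXk : ∀ k ∈ Ioc i n, Integrable (fun ω => X i ω * X k ω) μ :=
    fun k hk => hXi.integrable_mul (hXk k hk)
  have hSXk : ∀ k ∈ Ioc i n, Integrable (fun ω => S (i - 1) ω * X k ω) μ :=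
    fun k hk => (hS2 _).integrable_mul (hXk k hk)
  simp_rw [partialSum_sub_eq hS hin, mul_sum, partialSum_eq_add hS hi, add_mul]
  rw [integral_finsetSum (f := fun k ω => X i ω * X k ω + S (i - 1) ω * X k ω) _
      fun k hk => ((hXiXk k hk).add (hSXk k hk)).integrableOn,
    ← sum_add_distrib]
  exact sum_congr rfl fun k hk => integral_add (hXiXk k hk).integrableOn (hSXk k hk).integrableOn

lemma abs_setIntegral_partialSum_mul_sub_le [IsFiniteMeasure μ]
    (hS : ∀ n ω, S n ω = ∑ k ∈ Icc 1 n, X k ω) (hS2 : ∀ k, MemLp (S k) 2 μ) {ρ : ℕ → ℝ}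
    (hρ0 : ∀ j, 0 ≤ ρ j) (hρsum : Summable ρ) {C : ℝ} (hC : 0 ≤ C) {A : Set Ω} {i n : ℕ}
    (hi : 1 ≤ i) (hin : i ≤ n) {lam : ℝ} (hlam : 0 ≤ lam)
    (hSA : ∀ ω ∈ A, S (i - 1) ω ^ 2 ≤ lam ^ 2)
    (hii : |∑ k ∈ Icc (i + 1) n, ∫ ω in A, X i ω * X k ω ∂μ| ≤ C)
    (hiii : ∀ j, i < j → |∫ ω in A, S (i - 1) ω * X j ω ∂μ| ≤
      C * (∫ ω in A, S (i - 1) ω ^ 2 ∂μ) ^ ((1 : ℝ) / 2) * ρ (j - i)) :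
    |∫ ω in A, S i ω * (S n ω - S i ω) ∂μ| ≤ C + C * lam * (∑' j, ρ j) * √(μ.real A) := by
  rw [setIntegral_partialSum_mul_sub_eq hS hS2 hi hin A]
  refine (abs_add_le _ _).trans (add_le_add (by rwa [← Icc_add_one_left_eq_Ioc]) ?_)
  calc |∑ k ∈ Ioc i n, ∫ ω in A, S (i - 1) ω * X k ω ∂μ|
      ≤ ∑ k ∈ Ioc i n, C * (∫ ω in A, S (i - 1) ω ^ 2 ∂μ) ^ ((1 : ℝ) / 2) * ρ (k - i) :=
        (abs_sum_le_sum_abs _ _).trans (sum_le_sum fun k hk => hiii k (mem_Ioc.1 hk).1)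
    _ = C * (∫ ω in A, S (i - 1) ω ^ 2 ∂μ) ^ ((1 : ℝ) / 2) * ∑ k ∈ Ioc i n, ρ (k - i) := by
        rw [mul_sum]
    _ ≤ C * (lam * √(μ.real A)) * ∑' j, ρ j := by
        gcongr
        · exact sum_nonneg fun k _ => hρ0 _
        · exact setIntegral_sq_rpow_half_le hlam hSA
        · exact sum_Ioc_sub_le_tsum hρ0 hρsum i n
    _ = _ := by ring

end WeakDependence

lemma le_div_sq_add_div_of_sq_mul_le {p lam a b x y : ℝ} (hlam : 0 < lam) (ha : 0 ≤ a)
    (hb : 0 ≤ b) (hx : 0 ≤ x) (hy : 0 ≤ y) (h : lam ^ 2 * p ≤ a * x + b * lam * y) :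
    p ≤ (a + b) * x / lam ^ 2 + (a + b) * y / lam :=
  calc p ≤ (a * x + b * lam * y) / lam ^ 2 := by rw [le_div_iff₀ (by positivity)]; linarith
    _ = a * x / lam ^ 2 + b * y / lam := by field_simp
    _ ≤ _ := by gcongr <;> linarith

theorem maximal_inequality_weak_dependence_general
    {Ω : Type*} [MeasurableSpace Ω] (μ : Measure Ω) [IsProbabilityMeasure μ]
    (X : ℕ → Ω → ℝ) (S : ℕ → Ω → ℝ) (ρ : ℕ → ℝ) (C : ℝ)
    (hS : ∀ n ω, S n ω = ∑ k ∈ Finset.Icc 1 n, X k ω)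
    (hmeas : ∀ k, Measurable (X k))
    (hint : ∀ n, Integrable (fun ω => (S n ω) ^ 2) μ)
    (hρ0 : ∀ j, 0 ≤ ρ j) (hρsum : Summable ρ)
    (hvar : ∀ n : ℕ, ∫ ω, (S n ω) ^ 2 ∂μ ≤ C * n)
    (hii : ∀ n i : ℕ, ∀ A : Set Ω,
      MeasurableSet[⨆ k ∈ Set.Icc 1 i, MeasurableSpace.comap (X k) inferInstance] A →
      |∑ k ∈ Finset.Icc (i + 1) n, ∫ ω in A, X i ω * X k ω ∂μ| ≤ C)
    (hiii : ∀ i j : ℕ, i < j → ∀ A : Set Ω,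
      MeasurableSet[⨆ k ∈ Set.Icc 1 i, MeasurableSpace.comap (X k) inferInstance] A →
      |∫ ω in A, S (i - 1) ω * X j ω ∂μ| ≤
        C * (∫ ω in A, (S (i - 1) ω) ^ 2 ∂μ) ^ ((1 : ℝ) / 2) * ρ (j - i)) :
    ∃ C' : ℝ, ∀ lam : ℝ, 0 < lam → ∀ n : ℕ, 1 ≤ n →
      (μ {ω | ∃ i ∈ Finset.Icc 1 n, lam ≤ |S i ω|}).toReal ≤
        C' * n / lam ^ 2 + C' * Real.sqrt n / lam := by
  have hSmeas : ∀ k, Measurable (S k) := fun k => by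
    rw [funext (hS k)]; exact measurable_sum _ fun j _ => hmeas j
  have hS2 : ∀ k, MemLp (S k) 2 μ :=
    fun k => (memLp_two_iff_integrable_sq (hSmeas k).aestronglyMeasurable).2 (hint k)
  have hC : 0 ≤ C := by simpa using (integral_nonneg fun ω => sq_nonneg (S 1 ω)).trans (hvar 1)
  have hR : 0 ≤ ∑' j, ρ j := tsum_nonneg hρ0
  refine ⟨3 * C + 2 * (C * ∑' j, ρ j), fun lam hlam n _ => ?_⟩
  have hmax := sq_mul_measureReal_le_of_abs_setIntegral_cross_le (fun ω => by simp [hS])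
    hSmeas hS2 hlam (a := C) (b := C * lam * ∑' j, ρ j) (by positivity) n fun i hi => by
      obtain ⟨hi1, hin⟩ := mem_Icc.1 hi
      have hA : MeasurableSet[pastSigma X i] (firstPassage S lam i) :=
        measurableSet_firstPassage fun k hk => measurable_pastSigma hS hk
      exact abs_setIntegral_partialSum_mul_sub_le hS hS2 hρ0 hρsum hC hi1 hin hlam.le
        (fun ω hω => sq_le_of_mem_firstPassage hω (by omega)) (hii n i _ hA)
        fun j hj => hiii i j hj _ hA
  refine le_div_sq_add_div_of_sq_mul_le hlam (by positivity) (by positivity) n.cast_nonneg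
    (Real.sqrt_nonneg n) ?_
  rw [← measureReal_def]
  linarith [hvar n]

/-- A Kolmogorov-type maximal inequality for weakly dependent centered sequences
(Davydov's Lemma 2.2; second statement of Corollary 3.4 of the paper). -/
theorem maximal_inequality_weak_dependence
    {Ω : Type*} [MeasurableSpace Ω] (μ : Measure Ω) [IsProbabilityMeasure μ]
    (X : ℕ → Ω → ℝ) (S : ℕ → Ω → ℝ) (ρ : ℕ → ℝ) (C : ℝ)
    (hS : ∀ n ω, S n ω = ∑ k ∈ Finset.Icc 1 n, X k ω)
    (hmeas : ∀ k, Measurable (X k))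
    (hint : ∀ n, Integrable (fun ω => (S n ω) ^ 2) μ)
    (hcent : ∀ k, ∫ ω, X k ω ∂μ = 0)
    (hρ0 : ∀ j, 0 ≤ ρ j) (hρsum : Summable ρ)
    (hvar : ∀ n : ℕ, ∫ ω, (S n ω) ^ 2 ∂μ ≤ C * n)
    (hii : ∀ n i : ℕ, ∀ A : Set Ω,
      MeasurableSet[⨆ k ∈ Set.Icc 1 i, MeasurableSpace.comap (X k) inferInstance] A →
      |∑ k ∈ Finset.Icc (i + 1) n, ∫ ω in A, X i ω * X k ω ∂μ| ≤ C)
    (hiii : ∀ i j : ℕ, i < j → ∀ A : Set Ω,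
      MeasurableSet[⨆ k ∈ Set.Icc 1 i, MeasurableSpace.comap (X k) inferInstance] A →
      |∫ ω in A, S (i - 1) ω * X j ω ∂μ| ≤
        C * (∫ ω in A, (S (i - 1) ω) ^ 2 ∂μ) ^ ((1 : ℝ) / 2) * ρ (j - i)) :
    ∃ C' : ℝ, ∀ lam : ℝ, 0 < lam → ∀ n : ℕ, 1 ≤ n →
      (μ {ω | ∃ i ∈ Finset.Icc 1 n, lam ≤ |S i ω|}).toReal ≤
        C' * n / lam ^ 2 + C' * Real.sqrt n / lam :=
  maximal_inequality_weak_dependence_general μ X S ρ C hS hmeas hint hρ0 hρsum hvar hii hiii
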